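/- arXiv:1409.6573 — 3 statements merged into one kernel-verified Lean document; each statement's English description precedes it below -/
import Mathlib

section
/- Let H be a real Hilbert space and let t ↦ T(t) be a map from [0,1] to the bounded invertible linear operators on H such that t ↦ T(t)x is continuous for every x ∈ H and sup_{t ∈ [0,1]} (‖T(t)‖ + ‖T(t)⁻¹‖) < ∞. Define the bounded operator R : H → H by Rx = ∫₀¹ T(t) T(t)* x dt (Bochner integral). Then for every x ∈ H one has ⟨Rx, x⟩ ≥ (∫₀¹ ‖T(t)⁻¹‖⁻² dt) ‖x‖², and R is an invertible bounded operator on H, with ‖R⁻¹‖ ≤ (∫₀¹ ‖T(t)⁻¹‖⁻² dt)⁻¹. -/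
/-!
With `φ(t) = ‖T(t)⁻¹‖⁻²`, the identity `x = (T(t)⁻¹)* T(t)* x` gives
`φ(t) ‖x‖² ≤ ‖T(t)* x‖² = ⟪x, T(t) T(t)* x⟫`, and integrating over `[0, 1]` yields the coercivity
bound `c ‖x‖² ≤ ⟪R x, x⟫` with `c = ∫ φ > 0`. Lax–Milgram then makes `R` invertible, and
coercivity gives `c ‖R⁻¹ y‖ ≤ ‖y‖`.

The analytic work is measurability in a possibly non-separable `H`. The map `t ↦ T(t)* x` is only
weakly continuous; it is strongly measurable by a Pettis-type argument, since its values lie in the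
closed span of its values at a dense sequence of times. The map `t ↦ T(t) T(t)* x` is then handled
by approximating `t` by simple functions. Finally `t ↦ ‖T(t)⁻¹‖` is lower semicontinuous because
the uniform bound makes `t ↦ T(t)⁻¹` strongly continuous.
-/

open scoped InnerProductSpace
open MeasureTheory Filter Topology

section StronglyContinuousFamily

variable {X 𝕜 E F : Type*} [TopologicalSpace X] [NontriviallyNormedField 𝕜]
  [NormedAddCommGroup E] [NormedSpace 𝕜 E] [NormedAddCommGroup F] [NormedSpace 𝕜 F]

theorem continuous_symm_apply_of_norm_symm_le {S : X → E ≃L[𝕜] F}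
    (hS : ∀ x, Continuous fun t => S t x) {C : ℝ} (hC : ∀ t, ‖((S t).symm : F →L[𝕜] E)‖ ≤ C)
    (y : F) : Continuous fun t => (S t).symm y := by
  refine continuous_iff_continuousAt.2 fun t₀ => ?_
  set x := (S t₀).symm y
  have hlim : Tendsto (fun t => C * ‖S t₀ x - S t x‖) (𝓝 t₀) (𝓝 0) := by
    simpa using (((continuous_const (y := S t₀ x)).sub (hS x)).norm.const_mul C).tendsto t₀
  refine tendsto_iff_norm_sub_tendsto_zero.2 <|
    squeeze_zero (fun _ => norm_nonneg _) (fun t => ?_) hlim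
  have hdiff : (S t).symm y - x = (S t).symm (S t₀ x - S t x) := by simp [x, map_sub]
  rw [hdiff]
  exact ((S t).symm : F →L[𝕜] E).le_of_opNorm_le (hC t) _

theorem ContinuousLinearEquiv.inv_norm_symm_le_norm (e : E ≃L[𝕜] F) :
    ‖(e.symm : F →L[𝕜] E)‖⁻¹ ≤ ‖(e : E →L[𝕜] F)‖ := by
  rcases subsingleton_or_nontrivial E with hE | hE
  · simp [Subsingleton.elim (e.symm : F →L[𝕜] E) 0]
  · exact (inv_le_iff_one_le_mul₀ e.norm_symm_pos).2 e.one_le_norm_mul_norm_symm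

theorem stronglyMeasurable_apply_of_continuous [TopologicalSpace.PseudoMetrizableSpace X]
    [SecondCountableTopology X] [MeasurableSpace X] [OpensMeasurableSpace X]
    {A : X → E →L[𝕜] F} (hA : ∀ y, Continuous fun t => A t y) {g : X → E}
    (hg : StronglyMeasurable g) : StronglyMeasurable fun t => A t (g t) := by
  have hid : StronglyMeasurable (id : X → X) := stronglyMeasurable_id
  refine stronglyMeasurable_of_tendsto atTop (f := fun n t => A (hid.approx n t) (g t))
    (fun n => isBoundedBilinearMap_apply.continuous.comp_stronglyMeasurable
      ((((hid.approx n).map A).stronglyMeasurable).prodMk hg))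
    (tendsto_pi_nhds.2 fun t => ((hA (g t)).tendsto t).comp (hid.tendsto_approx t))

end StronglyContinuousFamily

section OperatorNorm

variable {X 𝕜 E F : Type*} [TopologicalSpace X] [DenselyNormedField 𝕜]
  [NormedAddCommGroup E] [NormedSpace 𝕜 E] [NormedAddCommGroup F] [NormedSpace 𝕜 F]

theorem lowerSemicontinuous_norm_of_continuous_apply {A : X → E →L[𝕜] F}
    (hA : ∀ y, Continuous fun t => A t y) : LowerSemicontinuous fun t => ‖A t‖ := by
  intro t r hr
  obtain ⟨y, hy, hry⟩ := (A t).exists_lt_apply_of_lt_opNorm hr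
  filter_upwards [(hA y).norm.continuousAt.eventually (lt_mem_nhds hry)] with s hs
  calc r < ‖A s y‖ := hs
    _ ≤ ‖A s‖ * ‖y‖ := (A s).le_opNorm y
    _ ≤ ‖A s‖ := mul_le_of_le_one_right (norm_nonneg _) hy.le

variable [MeasurableSpace X] [OpensMeasurableSpace X] {S : X → E ≃L[𝕜] F} {μ : Measure X}
  {C C' : ℝ}

theorem integrable_inv_sq_norm_symm [IsFiniteMeasure μ] (hS : ∀ x, Continuous fun t => S t x)
    (hC : ∀ t, ‖(S t : E →L[𝕜] F)‖ ≤ C) (hC' : ∀ t, ‖((S t).symm : F →L[𝕜] E)‖ ≤ C') :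
    Integrable (fun t => (‖((S t).symm : F →L[𝕜] E)‖ ^ 2)⁻¹) μ := by
  have hmeas : Measurable fun t => ‖((S t).symm : F →L[𝕜] E)‖ :=
    (lowerSemicontinuous_norm_of_continuous_apply
      (continuous_symm_apply_of_norm_symm_le hS hC')).measurable
  refine .of_bound ((hmeas.pow_const 2).inv.aestronglyMeasurable) (C ^ 2)
    (.of_forall fun t => ?_)
  rw [Real.norm_of_nonneg (by positivity), ← inv_pow]
  exact pow_le_pow_left₀ (by positivity) ((S t).inv_norm_symm_le_norm.trans (hC t)) 2

theorem integral_inv_sq_norm_symm_pos [Nontrivial E] [IsFiniteMeasure μ] (hμ : μ ≠ 0)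
    (hS : ∀ x, Continuous fun t => S t x)
    (hC : ∀ t, ‖(S t : E →L[𝕜] F)‖ ≤ C) (hC' : ∀ t, ‖((S t).symm : F →L[𝕜] E)‖ ≤ C') :
    0 < ∫ t, (‖((S t).symm : F →L[𝕜] E)‖ ^ 2)⁻¹ ∂μ := by
  rw [integral_pos_iff_support_of_nonneg (fun t => by positivity)
    (integrable_inv_sq_norm_symm hS hC hC')]
  have hsupp : Function.support (fun t => (‖((S t).symm : F →L[𝕜] E)‖ ^ 2)⁻¹) = Set.univ :=
    Function.support_eq_univ fun t => by simp [(S t).norm_symm_pos.ne']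
  rw [hsupp]
  exact Measure.measure_univ_pos.2 hμ

end OperatorNorm

section Pettis

variable {𝕜 H X : Type*} [RCLike 𝕜] [NormedAddCommGroup H] [InnerProductSpace 𝕜 H]
  [CompleteSpace H] [MeasurableSpace X]

theorem stronglyMeasurable_of_measurable_inner {g : X → H}
    (hg : ∀ z, Measurable fun t => ⟪z, g t⟫_𝕜)
    (v : ℕ → H) (hv : ∀ t, g t ∈ (Submodule.span 𝕜 (Set.range v)).topologicalClosure) :
    StronglyMeasurable g := by
  set U : ℕ → Submodule 𝕜 H := fun n => Submodule.span 𝕜 (v '' Set.Iio n)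
  have (n : ℕ) : FiniteDimensional 𝕜 (U n) :=
    FiniteDimensional.span_of_finite 𝕜 ((Set.finite_Iio n).image v)
  have hU : Monotone U := fun m n hmn =>
    Submodule.span_mono <| Set.image_mono <| Set.Iio_subset_Iio hmn
  have hspan : Submodule.span 𝕜 (Set.range v) ≤ ⨆ n, U n := by
    rw [Submodule.span_le]
    rintro _ ⟨i, rfl⟩
    exact Submodule.mem_iSup_of_mem (i + 1) (Submodule.subset_span ⟨i, Nat.lt_succ_self i, rfl⟩)
  have hproj : ∀ n, StronglyMeasurable fun t => (U n).starProjection (g t) := fun n => by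
    simp_rw [Submodule.starProjection_apply,
      (stdOrthonormalBasis 𝕜 (U n)).orthogonalProjectionOnto_apply_eq_sum, Submodule.coe_sum,
      Submodule.coe_smul]
    exact Finset.stronglyMeasurable_fun_sum _ fun i _ => (hg _).stronglyMeasurable.smul_const _
  refine stronglyMeasurable_of_tendsto atTop hproj (tendsto_pi_nhds.2 fun t => ?_)
  have hK : g t ∈ (⨆ n, U n).topologicalClosure :=
    Submodule.topologicalClosure_mono hspan (hv t)
  simpa [Submodule.starProjection_eq_self_iff.2 hK] using
    Submodule.starProjection_tendsto_closure_iSup U hU (g t)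

theorem stronglyMeasurable_of_continuous_inner [TopologicalSpace X]
    [TopologicalSpace.SeparableSpace X] [OpensMeasurableSpace X] {g : X → H}
    (hg : ∀ z, Continuous fun t => ⟪z, g t⟫_𝕜) :
    StronglyMeasurable g := by
  rcases isEmpty_or_nonempty X with _ | _
  · exact StronglyMeasurable.of_subsingleton_dom
  obtain ⟨d, hd⟩ := TopologicalSpace.exists_dense_seq X
  refine stronglyMeasurable_of_measurable_inner (fun z => (hg z).measurable) (g ∘ d) fun t => ?_
  rw [← Submodule.orthogonal_orthogonal_eq_closure]
  intro w hw
  have hzero : (fun t => ⟪w, g t⟫_𝕜) = fun _ => 0 :=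
    Continuous.ext_on hd (hg w) continuous_const <| by
      rintro _ ⟨i, rfl⟩
      exact Submodule.inner_left_of_mem_orthogonal
        (Submodule.subset_span (Set.mem_range_self i)) hw
  exact congrFun hzero t

end Pettis

section Adjoint

variable {𝕜 E F : Type*} [RCLike 𝕜] [NormedAddCommGroup E] [InnerProductSpace 𝕜 E]
  [CompleteSpace E] [NormedAddCommGroup F] [InnerProductSpace 𝕜 F] [CompleteSpace F]

theorem ContinuousLinearEquiv.norm_le_norm_symm_mul_norm_adjoint (S : E ≃L[𝕜] F) (x : F) :
    ‖x‖ ≤ ‖(S.symm : F →L[𝕜] E)‖ * ‖ContinuousLinearMap.adjoint (S : E →L[𝕜] F) x‖ := by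
  have hx : ContinuousLinearMap.adjoint (S.symm : F →L[𝕜] E)
      (ContinuousLinearMap.adjoint (S : E →L[𝕜] F) x) = x := by
    rw [← ContinuousLinearMap.comp_apply, ← ContinuousLinearMap.adjoint_comp,
      S.coe_comp_coe_symm, ContinuousLinearMap.adjoint_id, ContinuousLinearMap.id_apply]
  calc ‖x‖ = ‖ContinuousLinearMap.adjoint (S.symm : F →L[𝕜] E)
        (ContinuousLinearMap.adjoint (S : E →L[𝕜] F) x)‖ := by rw [hx]
    _ ≤ _ := by
      rw [← ContinuousLinearMap.adjoint.norm_map (S.symm : F →L[𝕜] E)]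
      exact ContinuousLinearMap.le_opNorm _ _

end Adjoint

theorem ContinuousLinearMap.exists_inverse_of_coercive {V : Type*} [NormedAddCommGroup V]
    [InnerProductSpace ℝ V] [CompleteSpace V] (R : V →L[ℝ] V) {c : ℝ} (hc : 0 < c)
    (hR : ∀ x, c * ‖x‖ ^ 2 ≤ ⟪R x, x⟫_ℝ) :
    ∃ Rinv : V →L[ℝ] V, Rinv.comp R = ContinuousLinearMap.id ℝ V ∧
      R.comp Rinv = ContinuousLinearMap.id ℝ V ∧ ‖Rinv‖ ≤ c⁻¹ := by
  have hB : IsCoercive ((innerSL ℝ).comp R) :=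
    ⟨c, hc, fun u => by simpa [sq, mul_assoc] using hR u⟩
  set e := hB.continuousLinearEquivOfBilin
  have he : (e : V →L[ℝ] V) = R := ContinuousLinearMap.ext fun v =>
    ext_inner_right ℝ fun w => hB.continuousLinearEquivOfBilin_apply v w
  have hbelow : ∀ u, c * ‖u‖ ≤ ‖R u‖ := fun u => by
    rcases (norm_nonneg u).eq_or_lt with hu | hu
    · simp [← hu]
    · refine le_of_mul_le_mul_right ?_ hu
      calc c * ‖u‖ * ‖u‖ = c * ‖u‖ ^ 2 := by ring
        _ ≤ ⟪R u, u⟫_ℝ := hR u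
        _ ≤ ‖R u‖ * ‖u‖ := real_inner_le_norm _ _
  refine ⟨e.symm, he ▸ e.coe_symm_comp_coe, he ▸ e.coe_comp_coe_symm,
    ContinuousLinearMap.opNorm_le_bound _ (inv_nonneg.2 hc.le) fun y => ?_⟩
  rw [inv_mul_eq_div, le_div_iff₀' hc]
  simpa [← he] using hbelow (e.symm y)

theorem inv_sq_norm_symm_mul_sq_le_inner {E F : Type*} [NormedAddCommGroup E]
    [InnerProductSpace ℝ E] [CompleteSpace E] [NormedAddCommGroup F] [InnerProductSpace ℝ F]
    [CompleteSpace F] (T : E ≃L[ℝ] F) (x : F) :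
    (‖(T.symm : F →L[ℝ] E)‖ ^ 2)⁻¹ * ‖x‖ ^ 2 ≤
      ⟪x, T (ContinuousLinearMap.adjoint (T : E →L[ℝ] F) x)⟫_ℝ := by
  rw [← T.coe_coe, ← ContinuousLinearMap.adjoint_inner_left, real_inner_self_eq_norm_sq]
  refine inv_mul_le_of_le_mul₀ (by positivity) (by positivity) ?_
  rw [← mul_pow]
  exact pow_le_pow_left₀ (norm_nonneg _) (T.norm_le_norm_symm_mul_norm_adjoint x) 2

section Integral

variable {X H : Type*} [TopologicalSpace X] [MeasurableSpace X] [OpensMeasurableSpace X]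
  [NormedAddCommGroup H] [InnerProductSpace ℝ H] [CompleteSpace H]
  {S : X → H ≃L[ℝ] H} {μ : Measure X} {C C' : ℝ}

theorem integrable_apply_adjoint_apply [TopologicalSpace.PseudoMetrizableSpace X]
    [SecondCountableTopology X] [IsFiniteMeasure μ] (hS : ∀ x, Continuous fun t => S t x)
    (hC : ∀ t, ‖(S t : H →L[ℝ] H)‖ ≤ C) (x : H) :
    Integrable (fun t => S t (ContinuousLinearMap.adjoint (S t : H →L[ℝ] H) x)) μ := by
  have hadj : StronglyMeasurable fun t => ContinuousLinearMap.adjoint (S t : H →L[ℝ] H) x :=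
    stronglyMeasurable_of_continuous_inner (𝕜 := ℝ) fun z => by
      simpa only [ContinuousLinearMap.adjoint_inner_right, ContinuousLinearEquiv.coe_coe] using
        (hS z).inner continuous_const
  refine .of_bound (stronglyMeasurable_apply_of_continuous
    (A := fun t => (S t : H →L[ℝ] H)) hS hadj).aestronglyMeasurable (C * (C * ‖x‖))
    (.of_forall fun t => ?_)
  have hC0 : 0 ≤ C := (norm_nonneg _).trans (hC t)
  calc ‖(S t : H →L[ℝ] H) (ContinuousLinearMap.adjoint (S t : H →L[ℝ] H) x)‖
      ≤ ‖(S t : H →L[ℝ] H)‖ * (‖ContinuousLinearMap.adjoint (S t : H →L[ℝ] H)‖ * ‖x‖) :=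
        ContinuousLinearMap.le_opNorm_of_le _ (ContinuousLinearMap.le_opNorm _ _)
    _ ≤ C * (C * ‖x‖) := by
        rw [ContinuousLinearMap.adjoint.norm_map]
        gcongr <;> exact hC t

theorem integral_inv_sq_norm_symm_mul_sq_le_inner [TopologicalSpace.PseudoMetrizableSpace X]
    [SecondCountableTopology X] [IsFiniteMeasure μ]
    (hS : ∀ x, Continuous fun t => S t x)
    (hC : ∀ t, ‖(S t : H →L[ℝ] H)‖ ≤ C) (hC' : ∀ t, ‖((S t).symm : H →L[ℝ] H)‖ ≤ C')
    (R : H →L[ℝ] H)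
    (hR : ∀ x, R x = ∫ t, S t (ContinuousLinearMap.adjoint (S t : H →L[ℝ] H) x) ∂μ) (x : H) :
    (∫ t, (‖((S t).symm : H →L[ℝ] H)‖ ^ 2)⁻¹ ∂μ) * ‖x‖ ^ 2 ≤ ⟪R x, x⟫_ℝ := by
  have hf := integrable_apply_adjoint_apply (μ := μ) hS hC x
  calc (∫ t, (‖((S t).symm : H →L[ℝ] H)‖ ^ 2)⁻¹ ∂μ) * ‖x‖ ^ 2
      = ∫ t, (‖((S t).symm : H →L[ℝ] H)‖ ^ 2)⁻¹ * ‖x‖ ^ 2 ∂μ := (integral_mul_const _ _).symm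
    _ ≤ ∫ t, ⟪x, S t (ContinuousLinearMap.adjoint (S t : H →L[ℝ] H) x)⟫_ℝ ∂μ :=
        integral_mono ((integrable_inv_sq_norm_symm hS hC hC').mul_const _) (hf.const_inner x)
          fun t => inv_sq_norm_symm_mul_sq_le_inner (S t) x
    _ = ⟪R x, x⟫_ℝ := by rw [integral_inner hf, ← hR, real_inner_comm]

end Integral

/-- For a strongly continuous, uniformly bounded family of invertible operators
`T(t)` on a real Hilbert space, the operator `R = ∫₀¹ T(t) T(t)* dt` satisfies
`⟨Rx, x⟩ ≥ (∫₀¹ ‖T(t)⁻¹‖⁻² dt) ‖x‖²` and is invertible, with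
`‖R⁻¹‖ ≤ (∫₀¹ ‖T(t)⁻¹‖⁻² dt)⁻¹`. -/
theorem stmt5 {H : Type*} [NormedAddCommGroup H] [InnerProductSpace ℝ H] [CompleteSpace H]
    (T : ℝ → H ≃L[ℝ] H)
    (hcont : ∀ x : H, ContinuousOn (fun t => (T t) x) (Set.Icc 0 1))
    (hbd : ∃ C : ℝ, ∀ t ∈ Set.Icc (0 : ℝ) 1,
      ‖(T t : H →L[ℝ] H)‖ + ‖((T t).symm : H →L[ℝ] H)‖ ≤ C)
    (R : H →L[ℝ] H)
    (hR : ∀ x : H, R x =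
      ∫ t in Set.Icc (0 : ℝ) 1, (T t) (ContinuousLinearMap.adjoint (T t : H →L[ℝ] H) x)) :
    (∀ x : H,
      (∫ t in Set.Icc (0 : ℝ) 1, (‖((T t).symm : H →L[ℝ] H)‖ ^ 2)⁻¹) * ‖x‖ ^ 2 ≤
        ⟪R x, x⟫_ℝ) ∧
    ∃ Rinv : H →L[ℝ] H,
      Rinv.comp R = ContinuousLinearMap.id ℝ H ∧
      R.comp Rinv = ContinuousLinearMap.id ℝ H ∧
      ‖Rinv‖ ≤ (∫ t in Set.Icc (0 : ℝ) 1, (‖((T t).symm : H →L[ℝ] H)‖ ^ 2)⁻¹)⁻¹ := by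
  obtain ⟨C, hC⟩ := hbd
  -- Extending `T` constantly outside `[0, 1]` makes the family strongly continuous on all of `ℝ`.
  set S : ℝ → H ≃L[ℝ] H := fun t => T (Set.projIcc 0 1 zero_le_one t)
  have hST : Set.EqOn S T (Set.Icc 0 1) := fun t ht => by simp [S, Set.projIcc_of_mem _ ht]
  have hS : ∀ x, Continuous fun t => S t x := fun x =>
    (hcont x).comp_continuous continuous_projIcc.subtype_val fun t => (Set.projIcc 0 1 _ t).2
  have hSC : ∀ t, ‖(S t : H →L[ℝ] H)‖ ≤ C := fun t =>
    (le_add_of_nonneg_right (norm_nonneg _)).trans (hC _ (Set.projIcc 0 1 _ t).2)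
  have hSC' : ∀ t, ‖((S t).symm : H →L[ℝ] H)‖ ≤ C := fun t =>
    (le_add_of_nonneg_left (norm_nonneg _)).trans (hC _ (Set.projIcc 0 1 _ t).2)
  have hc : (∫ t in Set.Icc (0 : ℝ) 1, (‖((T t).symm : H →L[ℝ] H)‖ ^ 2)⁻¹) =
      ∫ t in Set.Icc (0 : ℝ) 1, (‖((S t).symm : H →L[ℝ] H)‖ ^ 2)⁻¹ :=
    setIntegral_congr_fun measurableSet_Icc fun t ht => by rw [hST ht]
  have hRS : ∀ x, R x =
      ∫ t in Set.Icc (0 : ℝ) 1, S t (ContinuousLinearMap.adjoint (S t : H →L[ℝ] H) x) := fun x =>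
    (hR x).trans (setIntegral_congr_fun measurableSet_Icc fun t ht => by rw [hST ht])
  have hcoercive := integral_inv_sq_norm_symm_mul_sq_le_inner hS hSC hSC' R hRS
  rw [hc]
  refine ⟨hcoercive, ?_⟩
  rcases subsingleton_or_nontrivial H with hH | hH
  · exact ⟨0, Subsingleton.elim _ _, Subsingleton.elim _ _, by simp⟩
  · have hμ : volume.restrict (Set.Icc (0 : ℝ) 1) ≠ 0 := by simp [Measure.restrict_eq_zero]
    exact R.exists_inverse_of_coercive (integral_inv_sq_norm_symm_pos hμ hS hSC hSC') hcoercive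
end

section
/- Let H be a real Hilbert space and let t ↦ A(t) be a map from [0,1] to the bounded self-adjoint operators on H such that t ↦ A(t)x is continuous for every x ∈ H and there exist constants 0 < c ≤ C with c‖x‖² ≤ ⟨A(t)x, x⟩ ≤ C‖x‖² for all t and x (so each A(t) is invertible). Let a, b ∈ H. Then the operator R = ∫₀¹ A(t)⁻¹ dt is bounded, self-adjoint and invertible, and the infimum of ∫₀¹ ⟨A(t) ṁ(t), ṁ(t)⟩ dt over all absolutely continuous curves m : [0,1] → H with derivative ṁ ∈ L²([0,1]; H), m(0) = a and m(1) = b, equals ⟨R⁻¹(b − a), b − a⟩; moreover the infimum is attained exactly by the curve with ṁ(t) = A(t)⁻¹ R⁻¹(b − a), i.e. the curve along which A(t)ṁ(t) is constant in time. -/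
/-!
Put `q = R⁻¹ (b - a)` and `u t = A(t)⁻¹ q`, so that `A u` is constant and `∫ u = b - a`.
Every admissible `m'` is `u + w` with `∫ w = 0`; since `A(t)` is self-adjoint the cross term
integrates to `2 ⟪q, ∫ w⟫ = 0`, whence `∫ ⟪A m', m'⟫ = ⟪q, b - a⟫ + ∫ ⟪A w, w⟫`, and the last
integral is nonnegative and vanishes only for `w = 0` a.e. by coercivity of `A`.
`R` is invertible because `‖A(t)‖ ≤ C` makes every `A(t)⁻¹` coercive with constant `c / C²`.
-/

open scoped InnerProductSpace
open MeasureTheory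

namespace ContinuousLinearMap

variable {H : Type*} [NormedAddCommGroup H] [InnerProductSpace ℝ H]

theorem opNorm_le_of_inner_apply_self_le {T : H →L[ℝ] H} (hT : (T : H →ₗ[ℝ] H).IsSymmetric)
    (h0 : ∀ x, 0 ≤ ⟪T x, x⟫_ℝ) {C : ℝ} (hC : 0 ≤ C) (h : ∀ x, ⟪T x, x⟫_ℝ ≤ C * ‖x‖ ^ 2) :
    ‖T‖ ≤ C := by
  rw [T.norm_eq_iSup_rayleighQuotient hT]
  refine ciSup_le fun x => ?_
  rw [rayleighQuotient, reApplyInnerSelf_apply, RCLike.re_to_real,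
    abs_of_nonneg (div_nonneg (h0 x) (sq_nonneg _))]
  exact div_le_of_le_mul₀ (sq_nonneg _) hC (h x)

theorem mul_norm_le_norm_apply {T : H →L[ℝ] H} {c : ℝ} (h : ∀ x, c * ‖x‖ ^ 2 ≤ ⟪T x, x⟫_ℝ)
    (x : H) : c * ‖x‖ ≤ ‖T x‖ := by
  rcases (norm_nonneg x).eq_or_lt with hx | hx
  · simp [← hx]
  refine le_of_mul_le_mul_right ?_ hx
  calc c * ‖x‖ * ‖x‖ = c * ‖x‖ ^ 2 := by ring
    _ ≤ ⟪T x, x⟫_ℝ := h x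
    _ ≤ ‖T x‖ * ‖x‖ := real_inner_le_norm _ _

theorem opNorm_le_inv_of_mul_eq_one {T S : H →L[ℝ] H} {c : ℝ} (hc : 0 < c)
    (h : ∀ x, c * ‖x‖ ^ 2 ≤ ⟪T x, x⟫_ℝ) (hTS : T * S = 1) : ‖S‖ ≤ c⁻¹ := by
  refine S.opNorm_le_bound (by positivity) fun y => ?_
  have hy : T (S y) = y := congr($hTS y)
  rw [inv_mul_eq_div, le_div_iff₀' hc]
  simpa [hy] using T.mul_norm_le_norm_apply h (S y)

theorem div_sq_mul_sq_norm_le_inner_apply_of_mul_eq_one {T S : H →L[ℝ] H} {c C : ℝ}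
    (hc : 0 ≤ c) (h : ∀ x, c * ‖x‖ ^ 2 ≤ ⟪T x, x⟫_ℝ) (hTC : ‖T‖ ≤ C) (hTS : T * S = 1)
    (y : H) : c / C ^ 2 * ‖y‖ ^ 2 ≤ ⟪S y, y⟫_ℝ := by
  set z := S y
  have hz : T z = y := congr($hTS y)
  calc c / C ^ 2 * ‖y‖ ^ 2 = c / C ^ 2 * ‖T z‖ ^ 2 := by rw [hz]
    _ ≤ c / C ^ 2 * (C * ‖z‖) ^ 2 := by gcongr; exact T.le_of_opNorm_le hTC z
    _ = C ^ 2 / C ^ 2 * (c * ‖z‖ ^ 2) := by ring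
    _ ≤ c * ‖z‖ ^ 2 := mul_le_of_le_one_left (by positivity) (div_self_le_one _)
    _ ≤ ⟪T z, z⟫_ℝ := h z
    _ = ⟪z, y⟫_ℝ := by rw [hz, real_inner_comm]

theorem isUnit_of_mul_sq_norm_le_inner_apply [CompleteSpace H] {R : H →L[ℝ] H} {k : ℝ}
    (hk : 0 < k) (h : ∀ x, k * ‖x‖ ^ 2 ≤ ⟪R x, x⟫_ℝ) : IsUnit R := by
  have hR : IsCoercive ((innerSL ℝ).comp R) :=
    ⟨k, hk, fun x => by simpa [sq, mul_assoc] using h x⟩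
  set E := hR.continuousLinearEquivOfBilin
  have hE : (E : H →L[ℝ] H) = R :=
    ext fun v => ext_inner_right ℝ fun w => hR.continuousLinearEquivOfBilin_apply v w
  exact hE ▸ E.toUnit.isUnit

end ContinuousLinearMap

theorem IsSelfAdjoint.of_mul_eq_one {R : Type*} [Monoid R] [StarMul R] {a b : R}
    (ha : IsSelfAdjoint a) (hab : a * b = 1) (hba : b * a = 1) : IsSelfAdjoint b :=
  @IsSelfAdjoint.invOf _ _ _ a ⟨b, hba, hab⟩ ha

theorem MeasureTheory.AEStronglyMeasurable.clm_apply_of_forall {α 𝕜 E F : Type*}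
    [MeasurableSpace α] {μ : Measure α} [NontriviallyNormedField 𝕜] [NormedAddCommGroup E]
    [NormedSpace 𝕜 E] [NormedAddCommGroup F] [NormedSpace 𝕜 F] {A : α → E →L[𝕜] F}
    (hA : ∀ x, AEStronglyMeasurable (fun t => A t x) μ) {f : α → E}
    (hf : AEStronglyMeasurable f μ) : AEStronglyMeasurable (fun t => A t (f t)) μ := by
  obtain ⟨g, hg, hfg⟩ := hf
  have hsimple (s : SimpleFunc α E) : AEStronglyMeasurable (fun t => A t (s t)) μ := by
    induction s using SimpleFunc.induction with
    | @const y u hu =>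
      convert (hA y).indicator hu using 1
      ext t
      by_cases ht : t ∈ u <;> simp [ht]
    | add _ h₁ h₂ =>
      simp only [SimpleFunc.coe_add, Pi.add_apply, map_add]
      exact h₁.add h₂
  refine (aestronglyMeasurable_of_tendsto_ae _ (fun n => hsimple (hg.approx n))
    (ae_of_all _ fun t => ((A t).continuous.tendsto _).comp (hg.tendsto_approx t))).congr ?_
  filter_upwards [hfg] with t ht
  rw [ht]

theorem continuousOn_apply_of_mul_eq_one {X 𝕜 E : Type*} [TopologicalSpace X]
    [NontriviallyNormedField 𝕜] [NormedAddCommGroup E] [NormedSpace 𝕜 E]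
    {A B : X → E →L[𝕜] E} {s : Set X} {K : ℝ}
    (hA : ∀ x, ContinuousOn (fun t => A t x) s) (hAB : ∀ t ∈ s, A t * B t = 1)
    (hBA : ∀ t ∈ s, B t * A t = 1) (hB : ∀ t ∈ s, ‖B t‖ ≤ K) (x : E) :
    ContinuousOn (fun t => B t x) s := by
  intro t₀ ht₀
  set y := B t₀ x
  have hdist : ∀ t ∈ s, ‖B t x - B t₀ x‖ ≤ K * ‖A t₀ y - A t y‖ := by
    intro t ht
    have hx : A t₀ y = x := congr($(hAB t₀ ht₀) x)
    have hy : B t (A t y) = y := congr($(hBA t ht) y)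
    calc ‖B t x - B t₀ x‖ = ‖B t (A t₀ y - A t y)‖ := by rw [map_sub, hx, hy]
      _ ≤ K * ‖A t₀ y - A t y‖ := (B t).le_of_opNorm_le (hB t ht) _
  have hlim : Filter.Tendsto (fun t => K * ‖A t₀ y - A t y‖) (nhdsWithin t₀ s) (nhds 0) := by
    simpa using ((tendsto_const_nhds (x := A t₀ y)).sub (hA y t₀ ht₀)).norm.const_mul K
  exact tendsto_iff_norm_sub_tendsto_zero.mpr <|
    squeeze_zero' (.of_forall fun _ => norm_nonneg _) (eventually_nhdsWithin_of_forall hdist) hlim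

section Integral

variable {H : Type*} [NormedAddCommGroup H] [InnerProductSpace ℝ H]
  {α : Type*} [MeasurableSpace α] {μ : Measure α} {A : α → H →L[ℝ] H}

theorem integrable_inner_apply_self {C : ℝ} (hA : ∀ x, AEStronglyMeasurable (fun t => A t x) μ)
    (hAC : ∀ᵐ t ∂μ, ‖A t‖ ≤ C) {w : α → H} (hw : MemLp w 2 μ) :
    Integrable (fun t => ⟪A t (w t), w t⟫_ℝ) μ := by
  have hw' := hw.aestronglyMeasurable
  have hsq : Integrable (fun t => ‖w t‖ ^ 2) μ := (memLp_two_iff_integrable_sq_norm hw').mp hw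
  refine (hsq.const_mul C).mono' ((hw'.clm_apply_of_forall hA).inner hw') ?_
  filter_upwards [hAC] with t ht
  calc ‖⟪A t (w t), w t⟫_ℝ‖ ≤ ‖A t (w t)‖ * ‖w t‖ := norm_inner_le_norm _ _
    _ ≤ C * ‖w t‖ * ‖w t‖ := by gcongr; exact (A t).le_of_opNorm_le ht _
    _ = C * ‖w t‖ ^ 2 := by ring

theorem integral_inner_apply_self_eq_zero_iff {c : ℝ} (hc : 0 < c)
    (hlb : ∀ᵐ t ∂μ, ∀ x, c * ‖x‖ ^ 2 ≤ ⟪A t x, x⟫_ℝ) {w : α → H}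
    (hint : Integrable (fun t => ⟪A t (w t), w t⟫_ℝ) μ) :
    ∫ t, ⟪A t (w t), w t⟫_ℝ ∂μ = 0 ↔ w =ᵐ[μ] 0 := by
  have hnonneg : 0 ≤ᵐ[μ] fun t => ⟪A t (w t), w t⟫_ℝ :=
    hlb.mono fun t ht => (mul_nonneg hc.le (sq_nonneg _)).trans (ht _)
  rw [integral_eq_zero_iff_of_nonneg_ae hnonneg hint]
  refine Filter.eventually_congr (hlb.mono fun t ht => ?_)
  simp only [Pi.zero_apply]
  refine ⟨fun h => ?_, fun h => by simp [h]⟩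
  have : ‖w t‖ ^ 2 = 0 := by nlinarith [ht (w t), sq_nonneg ‖w t‖]
  simpa using this

variable [CompleteSpace H]

theorem isSelfAdjoint_of_apply_eq_integral {B : α → H →L[ℝ] H} {R : H →L[ℝ] H}
    (hB : ∀ x, Integrable (fun t => B t x) μ) (hsa : ∀ᵐ t ∂μ, IsSelfAdjoint (B t))
    (hR : ∀ x, R x = ∫ t, B t x ∂μ) : IsSelfAdjoint R := by
  refine ContinuousLinearMap.isSelfAdjoint_iff_isSymmetric.mpr fun x y => ?_
  calc ⟪R x, y⟫_ℝ = ∫ t, ⟪y, B t x⟫_ℝ ∂μ := by rw [hR, integral_inner (hB x), real_inner_comm]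
    _ = ∫ t, ⟪x, B t y⟫_ℝ ∂μ := integral_congr_ae <| hsa.mono fun t ht =>
        (ht.isSymmetric y x).symm.trans (real_inner_comm _ _)
    _ = ⟪x, R y⟫_ℝ := by rw [hR, integral_inner (hB y)]

theorem mul_sq_norm_le_inner_apply_of_apply_eq_integral [IsProbabilityMeasure μ]
    {B : α → H →L[ℝ] H} {R : H →L[ℝ] H} {k : ℝ} {x : H} (hB : Integrable (fun t => B t x) μ)
    (hlb : ∀ᵐ t ∂μ, k * ‖x‖ ^ 2 ≤ ⟪B t x, x⟫_ℝ) (hR : R x = ∫ t, B t x ∂μ) :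
    k * ‖x‖ ^ 2 ≤ ⟪R x, x⟫_ℝ := by
  rw [hR, real_inner_comm, ← integral_inner hB]
  calc k * ‖x‖ ^ 2 = ∫ _, k * ‖x‖ ^ 2 ∂μ := by simp
    _ ≤ ∫ t, ⟪x, B t x⟫_ℝ ∂μ := integral_mono_ae (integrable_const _) (hB.const_inner x) <|
        hlb.mono fun t ht => ht.trans_eq (real_inner_comm _ _)

theorem integral_inner_apply_add_self {q : H} {u w : α → H}
    (hsa : ∀ᵐ t ∂μ, IsSelfAdjoint (A t)) (hAu : ∀ᵐ t ∂μ, A t (u t) = q) (hu : Integrable u μ)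
    (hw : Integrable w μ) (hw0 : ∫ t, w t ∂μ = 0)
    (hint : Integrable (fun t => ⟪A t (w t), w t⟫_ℝ) μ) :
    ∫ t, ⟪A t (u t + w t), u t + w t⟫_ℝ ∂μ =
      ⟪q, ∫ t, u t ∂μ⟫_ℝ + ∫ t, ⟪A t (w t), w t⟫_ℝ ∂μ := by
  have hexpand : (fun t => ⟪A t (u t + w t), u t + w t⟫_ℝ) =ᵐ[μ]
      fun t => ⟪q, u t⟫_ℝ + 2 * ⟪q, w t⟫_ℝ + ⟪A t (w t), w t⟫_ℝ := by
    filter_upwards [hsa, hAu] with t hsa hAu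
    have hsym : ⟪A t (w t), u t⟫_ℝ = ⟪q, w t⟫_ℝ := by
      rw [← hAu, real_inner_comm]
      exact (hsa.isSymmetric _ _).symm
    simp only [map_add, inner_add_left, inner_add_right, hAu, hsym]
    ring
  have hqu : Integrable (fun t => ⟪q, u t⟫_ℝ) μ := hu.const_inner q
  have hqw : Integrable (fun t => 2 * ⟪q, w t⟫_ℝ) μ := (hw.const_inner q).const_mul 2
  have hquw : Integrable (fun t => ⟪q, u t⟫_ℝ + 2 * ⟪q, w t⟫_ℝ) μ := hqu.add hqw
  rw [integral_congr_ae hexpand, integral_add hquw hint, integral_add hqu hqw,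
    integral_const_mul, integral_inner hu, integral_inner hw, hw0, inner_zero_right, mul_zero,
    add_zero]

theorem isLeast_integral_inner_apply_self [IsFiniteMeasure μ] {c C : ℝ} (hc : 0 < c)
    (hA : ∀ x, AEStronglyMeasurable (fun t => A t x) μ) (hsa : ∀ᵐ t ∂μ, IsSelfAdjoint (A t))
    (hlb : ∀ᵐ t ∂μ, ∀ x, c * ‖x‖ ^ 2 ≤ ⟪A t x, x⟫_ℝ) (hAC : ∀ᵐ t ∂μ, ‖A t‖ ≤ C)
    {q a b : H} {u : α → H} (hAu : ∀ᵐ t ∂μ, A t (u t) = q) (hu : MemLp u 2 μ)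
    (hab : a + ∫ t, u t ∂μ = b) :
    IsLeast {E : ℝ | ∃ m : α → H, MemLp m 2 μ ∧ a + ∫ t, m t ∂μ = b ∧
        E = ∫ t, ⟪A t (m t), m t⟫_ℝ ∂μ} ⟪q, b - a⟫_ℝ ∧
      ∀ m : α → H, MemLp m 2 μ → a + ∫ t, m t ∂μ = b →
        (∫ t, ⟪A t (m t), m t⟫_ℝ ∂μ = ⟪q, b - a⟫_ℝ ↔ m =ᵐ[μ] u) := by
  have hint (w : α → H) (hw : MemLp w 2 μ) := integrable_inner_apply_self hA hAC hw
  have hsplit (m : α → H) (hm : MemLp m 2 μ) (hmab : a + ∫ t, m t ∂μ = b) :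
      ∫ t, ⟪A t (m t), m t⟫_ℝ ∂μ =
        ⟪q, b - a⟫_ℝ + ∫ t, ⟪A t (m t - u t), m t - u t⟫_ℝ ∂μ := by
    have hw0 : ∫ t, m t - u t ∂μ = 0 := by
      rw [integral_sub (hm.integrable one_le_two) (hu.integrable one_le_two),
        eq_sub_of_add_eq' hmab, eq_sub_of_add_eq' hab, sub_self]
    have := integral_inner_apply_add_self (w := fun t => m t - u t) hsa hAu
      (hu.integrable one_le_two) ((hm.sub hu).integrable one_le_two) hw0 (hint _ (hm.sub hu))
    simpa only [add_sub_cancel, eq_sub_of_add_eq' hab] using this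
  refine ⟨⟨⟨u, hu, hab, ?_⟩, ?_⟩, fun m hm hmab => ?_⟩
  · simpa using (hsplit u hu hab).symm
  · rintro _ ⟨m, hm, hmab, rfl⟩
    rw [hsplit m hm hmab]
    exact le_add_of_nonneg_right <| integral_nonneg_of_ae <|
      hlb.mono fun t ht => (mul_nonneg hc.le (sq_nonneg _)).trans (ht _)
  · rw [hsplit m hm hmab, add_eq_left, integral_inner_apply_self_eq_zero_iff hc hlb
      (hint (fun t => m t - u t) (hm.sub hu))]
    exact Filter.eventuallyEq_iff_sub.symm

end Integral

/-- Reduction of the quadratic variational problem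
`inf ∫₀¹ ⟨A(t) ṁ(t), ṁ(t)⟩ dt` over absolutely continuous curves `m` (with `ṁ ∈ L²`, `m(0) = a`,
`m(1) = b`, the curve being parametrized by its derivative `m'` via `m(t) = a + ∫₀ᵗ m'`):
with `R = ∫₀¹ A(t)⁻¹ dt`, the operator `R` is self-adjoint and invertible, the infimum equals
`⟨R⁻¹(b − a), b − a⟩`, and it is attained exactly at `m'(t) = A(t)⁻¹ R⁻¹ (b − a)`
(the curve along which `A(t) ṁ(t)` is constant). -/
theorem stmt6 {H : Type*} [NormedAddCommGroup H] [InnerProductSpace ℝ H] [CompleteSpace H]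
    (A B : ℝ → H →L[ℝ] H)
    (hsa : ∀ t ∈ Set.Icc (0 : ℝ) 1, IsSelfAdjoint (A t))
    (hcont : ∀ x : H, ContinuousOn (fun t => A t x) (Set.Icc 0 1))
    (c C : ℝ) (hc : 0 < c) (hcC : c ≤ C)
    (hlb : ∀ t ∈ Set.Icc (0 : ℝ) 1, ∀ x : H, c * ‖x‖ ^ 2 ≤ ⟪A t x, x⟫_ℝ)
    (hub : ∀ t ∈ Set.Icc (0 : ℝ) 1, ∀ x : H, ⟪A t x, x⟫_ℝ ≤ C * ‖x‖ ^ 2)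
    (hB : ∀ t ∈ Set.Icc (0 : ℝ) 1,
      (A t).comp (B t) = ContinuousLinearMap.id ℝ H ∧
      (B t).comp (A t) = ContinuousLinearMap.id ℝ H)
    (a b : H)
    (R : H →L[ℝ] H) (hR : ∀ x : H, R x = ∫ t in Set.Icc (0 : ℝ) 1, B t x) :
    IsSelfAdjoint R ∧
    ∃ Rinv : H →L[ℝ] H,
      Rinv.comp R = ContinuousLinearMap.id ℝ H ∧
      R.comp Rinv = ContinuousLinearMap.id ℝ H ∧
      IsLeast
        {E : ℝ | ∃ m' : ℝ → H,
          MemLp m' 2 (volume.restrict (Set.Icc (0 : ℝ) 1)) ∧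
          a + (∫ s in Set.Icc (0 : ℝ) 1, m' s) = b ∧
          E = ∫ t in Set.Icc (0 : ℝ) 1, ⟪A t (m' t), m' t⟫_ℝ}
        ⟪Rinv (b - a), b - a⟫_ℝ ∧
      ∀ m' : ℝ → H,
        MemLp m' 2 (volume.restrict (Set.Icc (0 : ℝ) 1)) →
        a + (∫ s in Set.Icc (0 : ℝ) 1, m' s) = b →
        ((∫ t in Set.Icc (0 : ℝ) 1, ⟪A t (m' t), m' t⟫_ℝ) = ⟪Rinv (b - a), b - a⟫_ℝ ↔
          m' =ᵐ[volume.restrict (Set.Icc (0 : ℝ) 1)] fun t => B t (Rinv (b - a))) := by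
  set μ := volume.restrict (Set.Icc (0 : ℝ) 1)
  have : IsProbabilityMeasure μ := ⟨by simp [μ]⟩
  have on_Icc {p : ℝ → Prop} (h : ∀ t ∈ Set.Icc (0 : ℝ) 1, p t) : ∀ᵐ t ∂μ, p t :=
    ae_restrict_of_forall_mem measurableSet_Icc h
  have hC : 0 < C := hc.trans_le hcC
  have hAC (t) (ht : t ∈ Set.Icc (0 : ℝ) 1) : ‖A t‖ ≤ C :=
    (A t).opNorm_le_of_inner_apply_self_le (hsa t ht).isSymmetric
      (fun x => (mul_nonneg hc.le (sq_nonneg _)).trans (hlb t ht x)) hC.le (hub t ht)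
  have hBc (t) (ht : t ∈ Set.Icc (0 : ℝ) 1) : ‖B t‖ ≤ c⁻¹ :=
    (A t).opNorm_le_inv_of_mul_eq_one hc (hlb t ht) (hB t ht).1
  have hBmem (x : H) : MemLp (fun t => B t x) 2 μ :=
    .of_bound ((continuousOn_apply_of_mul_eq_one hcont (fun t ht => (hB t ht).1)
      (fun t ht => (hB t ht).2) hBc x).aestronglyMeasurable measurableSet_Icc) (c⁻¹ * ‖x‖)
      (on_Icc fun t ht => by simpa using (B t).le_of_opNorm_le (hBc t ht) x)
  have hRcoercive (x : H) : c / C ^ 2 * ‖x‖ ^ 2 ≤ ⟪R x, x⟫_ℝ :=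
    mul_sq_norm_le_inner_apply_of_apply_eq_integral ((hBmem x).integrable one_le_two)
      (on_Icc fun t ht => (A t).div_sq_mul_sq_norm_le_inner_apply_of_mul_eq_one hc.le (hlb t ht)
        (hAC t ht) (hB t ht).1 x) (hR x)
  obtain ⟨U, hU⟩ := ContinuousLinearMap.isUnit_of_mul_sq_norm_le_inner_apply
    (by positivity) hRcoercive
  have hRU : R ((↑U⁻¹ : H →L[ℝ] H) (b - a)) = b - a := by
    rw [← hU]; exact congr($(U.mul_inv) (b - a))
  refine ⟨isSelfAdjoint_of_apply_eq_integral (fun x => (hBmem x).integrable one_le_two)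
      (on_Icc fun t ht => (hsa t ht).of_mul_eq_one (hB t ht).1 (hB t ht).2) hR,
    ↑U⁻¹, by rw [← hU]; exact U.inv_mul, by rw [← hU]; exact U.mul_inv, ?_⟩
  exact isLeast_integral_inner_apply_self hc (fun x => (hcont x).aestronglyMeasurable
      measurableSet_Icc) (on_Icc hsa) (on_Icc hlb) (on_Icc hAC)
    (on_Icc fun t ht => congr($((hB t ht).1) _)) (hBmem _) (by rw [← hR, hRU]; abel)
end

section
/- Let K_V : ℝ^d × ℝ^d → ℝ^{d×d} be a C¹ matrix-valued kernel with K_V(y, x) = K_V(x, y)ᵀ for all x, y, let K_H : ℝ^d × ℝ^d → ℝ be a C¹ scalar kernel with K_H(y, x) = K_H(x, y), let σ > 0, N ∈ ℕ, and let α₁, …, α_N ∈ ℝ be fixed. Suppose (x₁, …, x_N, z₁, …, z_N) : [0,1] → (ℝ^d)^N × (ℝ^d)^N is a C¹ solution of the system ẋ_k(t) = Σ_{ℓ=1}^N K_V(x_k(t), x_ℓ(t)) z_ℓ(t) and ż_k(t) = − Σ_{ℓ=1}^N ∇₁(z_k(t) · K_V(·, x_ℓ(t)) z_ℓ(t))(x_k(t))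 − (1/σ²) Σ_{ℓ=1}^N α_k α_ℓ ∇₁ K_H(x_k(t), x_ℓ(t)), where ∇₁ denotes the gradient with respect to the first spatial argument. Then the quantity E(t) = ½ Σ_{k,ℓ=1}^N z_k(t) · K_V(x_k(t), x_ℓ(t)) z_ℓ(t) + (1/(2σ²)) Σ_{k,ℓ=1}^N α_k α_ℓ K_H(x_k(t), x_ℓ(t)) is constant on [0,1]. -/
/-!
The particle system is Hamiltonian for `E`: `ẋ_k = ∂E/∂z_k` and `ż_k = -∂E/∂x_k`. Here the
symmetry of the kernels is what makes each pair `(k, ℓ)` of `E` contribute the same gradient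
through both of its slots, so that `∂E/∂x_k` is twice the one-slot sum. Hence
`dE/dt = Σ_k ⟪∂E/∂x_k, ẋ_k⟫ + ⟪ż_k, ∂E/∂z_k⟫ = 0`.
-/

open scoped BigOperators InnerProductSpace
open Function

section
variable {E : Type*} [NormedAddCommGroup E] [InnerProductSpace ℝ E] [CompleteSpace E]

theorem DifferentiableAt.hasDerivAt_uncurry_comp_gradient {g : E → E → ℝ} {γ₁ γ₂ : ℝ → E}
    {u₁ u₂ : E} {t : ℝ}
    (hg : DifferentiableAt ℝ (uncurry g) (γ₁ t, γ₂ t))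
    (h₁ : HasDerivAt γ₁ u₁ t) (h₂ : HasDerivAt γ₂ u₂ t) :
    HasDerivAt (fun s => g (γ₁ s) (γ₂ s))
      (⟪gradient (g · (γ₂ t)) (γ₁ t), u₁⟫_ℝ + ⟪gradient (g (γ₁ t)) (γ₂ t), u₂⟫_ℝ) t := by
  set D := fderiv ℝ (uncurry g) (γ₁ t, γ₂ t)
  have hD : HasFDerivAt (uncurry g) D (γ₁ t, γ₂ t) := hg.hasFDerivAt
  have hD₁ : HasFDerivAt (g · (γ₂ t)) (D.comp (.inl ℝ E E)) (γ₁ t) := by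
    exact hD.comp (γ₁ t) (hasFDerivAt_prodMk_left (𝕜 := ℝ) (γ₁ t) (γ₂ t))
  have hD₂ : HasFDerivAt (g (γ₁ t)) (D.comp (.inr ℝ E E)) (γ₂ t) := by
    exact hD.comp (γ₂ t) (hasFDerivAt_prodMk_right (𝕜 := ℝ) (γ₁ t) (γ₂ t))
  rw [inner_gradient_left, inner_gradient_left, hD₁.fderiv, hD₂.fderiv]
  refine (hD.comp_hasDerivAt t (h₁.prodMk h₂)).congr_deriv ?_
  show D (u₁, u₂) = D (u₁, 0) + D (0, u₂)
  rw [← map_add, Prod.mk_add_mk, add_zero, zero_add]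

theorem DifferentiableAt.hasDerivAt_inner_kernel_apply {K : E → E → E →L[ℝ] E}
    {x₁ x₂ z₁ z₂ : ℝ → E} {u₁ u₂ w₁ w₂ : E} {t : ℝ}
    (hK : DifferentiableAt ℝ (uncurry K) (x₁ t, x₂ t))
    (hx₁ : HasDerivAt x₁ u₁ t) (hx₂ : HasDerivAt x₂ u₂ t)
    (hz₁ : HasDerivAt z₁ w₁ t) (hz₂ : HasDerivAt z₂ w₂ t) :
    HasDerivAt (fun s => ⟪z₁ s, K (x₁ s) (x₂ s) (z₂ s)⟫_ℝ)
      (⟪gradient (fun y => ⟪z₁ t, K y (x₂ t) (z₂ t)⟫_ℝ) (x₁ t), u₁⟫_ℝ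
        + ⟪gradient (fun y => ⟪z₁ t, K (x₁ t) y (z₂ t)⟫_ℝ) (x₂ t), u₂⟫_ℝ
        + (⟪w₁, K (x₁ t) (x₂ t) (z₂ t)⟫_ℝ + ⟪z₁ t, K (x₁ t) (x₂ t) w₂⟫_ℝ)) t := by
  set M' := fderiv ℝ (uncurry K) (x₁ t, x₂ t) (u₁, u₂)
  have hM : HasDerivAt (fun s => K (x₁ s) (x₂ s)) M' t := by
    exact hK.hasFDerivAt.comp_hasDerivAt t (hx₁.prodMk hx₂)
  set T := (innerSL ℝ (z₁ t)).comp (ContinuousLinearMap.apply ℝ E (z₂ t))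
  have hTK : DifferentiableAt ℝ (uncurry fun x y => ⟪z₁ t, K x y (z₂ t)⟫_ℝ) (x₁ t, x₂ t) :=
    T.differentiableAt.comp _ hK
  -- Uniqueness of derivatives identifies `⟪z₁, M' z₂⟫` with the two partial gradient terms.
  have hfrozen : ⟪z₁ t, M' (z₂ t)⟫_ℝ
      = ⟪gradient (fun y => ⟪z₁ t, K y (x₂ t) (z₂ t)⟫_ℝ) (x₁ t), u₁⟫_ℝ
        + ⟪gradient (fun y => ⟪z₁ t, K (x₁ t) y (z₂ t)⟫_ℝ) (x₂ t), u₂⟫_ℝ :=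
    (T.hasFDerivAt.comp_hasDerivAt t hM).unique (hTK.hasDerivAt_uncurry_comp_gradient hx₁ hx₂)
  refine (hz₁.inner ℝ (hM.clm_apply hz₂)).congr_deriv ?_
  rw [← hfrozen, inner_add_right]
  ring

variable {ι : Type*} [Fintype ι]

theorem HasDerivAt.sum_sum_of_swap {F : ι → ι → ℝ → ℝ} {A : ι → ι → ℝ} {t : ℝ}
    (h : ∀ k ℓ, HasDerivAt (F k ℓ) (A k ℓ + A ℓ k) t) :
    HasDerivAt (fun s => ∑ k, ∑ ℓ, F k ℓ s) (2 * ∑ k, ∑ ℓ, A k ℓ) t := by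
  refine (HasDerivAt.fun_sum fun k _ => HasDerivAt.fun_sum fun ℓ _ => h k ℓ).congr_deriv ?_
  rw [Finset.sum_congr rfl fun k _ => Finset.sum_add_distrib, Finset.sum_add_distrib,
    Finset.sum_comm (f := fun k ℓ => A ℓ k)]
  ring

theorem hasDerivAt_sum_sum_inner_kernel {K : E → E → E →L[ℝ] E}
    (hK : Differentiable ℝ (uncurry K))
    (hKsymm : ∀ x y, K y x = ContinuousLinearMap.adjoint (K x y))
    {x z : ι → ℝ → E} {u w : ι → E} {t : ℝ}
    (hx : ∀ k, HasDerivAt (x k) (u k) t) (hz : ∀ k, HasDerivAt (z k) (w k) t) :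
    HasDerivAt (fun s => ∑ k, ∑ ℓ, ⟪z k s, K (x k s) (x ℓ s) (z ℓ s)⟫_ℝ)
      (2 * ∑ k, (⟪∑ ℓ, gradient (fun y => ⟪z k t, K y (x ℓ t) (z ℓ t)⟫_ℝ) (x k t), u k⟫_ℝ
        + ⟪w k, ∑ ℓ, K (x k t) (x ℓ t) (z ℓ t)⟫_ℝ)) t := by
  have hswap : ∀ x y p q, ⟪p, K y x q⟫_ℝ = ⟪q, K x y p⟫_ℝ := fun x y p q => by
    rw [hKsymm, ContinuousLinearMap.adjoint_inner_right, real_inner_comm]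
  refine (HasDerivAt.sum_sum_of_swap (A := fun k ℓ =>
      ⟪gradient (fun y => ⟪z k t, K y (x ℓ t) (z ℓ t)⟫_ℝ) (x k t), u k⟫_ℝ
        + ⟪w k, K (x k t) (x ℓ t) (z ℓ t)⟫_ℝ) fun k ℓ =>
    ((hK _).hasDerivAt_inner_kernel_apply (hx k) (hx ℓ) (hz k) (hz ℓ)).congr_deriv
      ?_).congr_deriv ?_
  · have hgrad : (fun y => ⟪z k t, K (x k t) y (z ℓ t)⟫_ℝ)
        = fun y => ⟪z ℓ t, K y (x k t) (z k t)⟫_ℝ := funext fun y => (hswap _ _ _ _).symm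
    rw [hgrad, hswap (x k t) (x ℓ t) (w ℓ) (z k t)]
    ring
  · simp only [sum_inner, inner_sum, Finset.sum_add_distrib]

theorem hasDerivAt_sum_sum_mul_kernel {g : E → E → ℝ} (hg : Differentiable ℝ (uncurry g))
    (hgsymm : ∀ x y, g y x = g x y) (α : ι → ℝ) {x : ι → ℝ → E} {u : ι → E} {t : ℝ}
    (hx : ∀ k, HasDerivAt (x k) (u k) t) :
    HasDerivAt (fun s => ∑ k, ∑ ℓ, α k * α ℓ * g (x k s) (x ℓ s))
      (2 * ∑ k, ⟪∑ ℓ, (α k * α ℓ) • gradient (fun y => g y (x ℓ t)) (x k t), u k⟫_ℝ) t := by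
  refine (HasDerivAt.sum_sum_of_swap (A := fun k ℓ =>
      α k * α ℓ * ⟪gradient (fun y => g y (x ℓ t)) (x k t), u k⟫_ℝ) fun k ℓ =>
    (((hg _).hasDerivAt_uncurry_comp_gradient (hx k) (hx ℓ)).const_mul (α k * α ℓ)).congr_deriv
      ?_).congr_deriv ?_
  · rw [show g (x k t) = (g · (x k t)) from funext fun y => hgsymm y (x k t)]
    ring
  · simp only [sum_inner, real_inner_smul_left, mul_assoc]
end

theorem stmt7_general {d N : ℕ} (σ : ℝ)
    (KV : EuclideanSpace ℝ (Fin d) → EuclideanSpace ℝ (Fin d) →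
      (EuclideanSpace ℝ (Fin d) →L[ℝ] EuclideanSpace ℝ (Fin d)))
    (KH : EuclideanSpace ℝ (Fin d) → EuclideanSpace ℝ (Fin d) → ℝ)
    (hKV : ContDiff ℝ 1 (fun p : EuclideanSpace ℝ (Fin d) × EuclideanSpace ℝ (Fin d) =>
      KV p.1 p.2))
    (hKVsymm : ∀ x y, KV y x = ContinuousLinearMap.adjoint (KV x y))
    (hKH : ContDiff ℝ 1 (fun p : EuclideanSpace ℝ (Fin d) × EuclideanSpace ℝ (Fin d) =>
      KH p.1 p.2))
    (hKHsymm : ∀ x y, KH y x = KH x y)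
    (α : Fin N → ℝ)
    (x z : Fin N → ℝ → EuclideanSpace ℝ (Fin d))
    (hx : ∀ k, ∀ t ∈ Set.Icc (0 : ℝ) 1,
      HasDerivAt (x k) (∑ ℓ, KV (x k t) (x ℓ t) (z ℓ t)) t)
    (hz : ∀ k, ∀ t ∈ Set.Icc (0 : ℝ) 1,
      HasDerivAt (z k)
        (-(∑ ℓ, gradient (fun y => ⟪z k t, KV y (x ℓ t) (z ℓ t)⟫_ℝ) (x k t))
          - (σ ^ 2)⁻¹ • ∑ ℓ, (α k * α ℓ) • gradient (fun y => KH y (x ℓ t)) (x k t)) t) :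
    ∀ t ∈ Set.Icc (0 : ℝ) 1,
      (1 / 2) * ∑ k, ∑ ℓ, ⟪z k t, KV (x k t) (x ℓ t) (z ℓ t)⟫_ℝ
          + (1 / (2 * σ ^ 2)) * ∑ k, ∑ ℓ, α k * α ℓ * KH (x k t) (x ℓ t)
        = (1 / 2) * ∑ k, ∑ ℓ, ⟪z k 0, KV (x k 0) (x ℓ 0) (z ℓ 0)⟫_ℝ
          + (1 / (2 * σ ^ 2)) * ∑ k, ∑ ℓ, α k * α ℓ * KH (x k 0) (x ℓ 0) := by
  have hE : ∀ t ∈ Set.Icc (0 : ℝ) 1, HasDerivAt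
      (fun s => (1 / 2) * ∑ k, ∑ ℓ, ⟪z k s, KV (x k s) (x ℓ s) (z ℓ s)⟫_ℝ
        + (1 / (2 * σ ^ 2)) * ∑ k, ∑ ℓ, α k * α ℓ * KH (x k s) (x ℓ s)) 0 t := by
    intro t ht
    have hkin := hasDerivAt_sum_sum_inner_kernel (hKV.differentiable one_ne_zero) hKVsymm
      (fun k => hx k t ht) (fun k => hz k t ht)
    have hpot := hasDerivAt_sum_sum_mul_kernel (hKH.differentiable one_ne_zero) hKHsymm α
      (fun k => hx k t ht)
    refine ((hkin.const_mul (1 / 2)).add (hpot.const_mul (1 / (2 * σ ^ 2)))).congr_deriv ?_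
    simp only [inner_sub_left, inner_neg_left, real_inner_smul_left, Finset.sum_add_distrib,
      Finset.sum_sub_distrib, Finset.sum_neg_distrib, ← Finset.mul_sum]
    ring
  exact fun t ht => constant_of_has_deriv_right_zero
    (fun s hs => (hE s hs).continuousAt.continuousWithinAt)
    (fun s hs => (hE s (Set.Ico_subset_Icc_self hs)).hasDerivWithinAt) t ht

/-- Conservation of the Hamiltonian along the singular (particle) solutions of
the metamorphosis equations. -/
theorem stmt7 {d N : ℕ} (σ : ℝ) (hσ : 0 < σ)
    (KV : EuclideanSpace ℝ (Fin d) → EuclideanSpace ℝ (Fin d) →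
      (EuclideanSpace ℝ (Fin d) →L[ℝ] EuclideanSpace ℝ (Fin d)))
    (KH : EuclideanSpace ℝ (Fin d) → EuclideanSpace ℝ (Fin d) → ℝ)
    (hKV : ContDiff ℝ 1 (fun p : EuclideanSpace ℝ (Fin d) × EuclideanSpace ℝ (Fin d) =>
      KV p.1 p.2))
    (hKVsymm : ∀ x y, KV y x = ContinuousLinearMap.adjoint (KV x y))
    (hKH : ContDiff ℝ 1 (fun p : EuclideanSpace ℝ (Fin d) × EuclideanSpace ℝ (Fin d) =>
      KH p.1 p.2))
    (hKHsymm : ∀ x y, KH y x = KH x y)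
    (α : Fin N → ℝ)
    (x z : Fin N → ℝ → EuclideanSpace ℝ (Fin d))
    (hx : ∀ k, ∀ t ∈ Set.Icc (0 : ℝ) 1,
      HasDerivAt (x k) (∑ ℓ, KV (x k t) (x ℓ t) (z ℓ t)) t)
    (hz : ∀ k, ∀ t ∈ Set.Icc (0 : ℝ) 1,
      HasDerivAt (z k)
        (-(∑ ℓ, gradient (fun y => ⟪z k t, KV y (x ℓ t) (z ℓ t)⟫_ℝ) (x k t))
          - (σ ^ 2)⁻¹ • ∑ ℓ, (α k * α ℓ) • gradient (fun y => KH y (x ℓ t)) (x k t)) t) :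
    ∀ t ∈ Set.Icc (0 : ℝ) 1,
      (1 / 2) * ∑ k, ∑ ℓ, ⟪z k t, KV (x k t) (x ℓ t) (z ℓ t)⟫_ℝ
          + (1 / (2 * σ ^ 2)) * ∑ k, ∑ ℓ, α k * α ℓ * KH (x k t) (x ℓ t)
        = (1 / 2) * ∑ k, ∑ ℓ, ⟪z k 0, KV (x k 0) (x ℓ 0) (z ℓ 0)⟫_ℝ
          + (1 / (2 * σ ^ 2)) * ∑ k, ∑ ℓ, α k * α ℓ * KH (x k 0) (x ℓ 0) :=
  stmt7_general σ KV KH hKV hKVsymm hKH hKHsymm α x z hx hz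
end
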